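/- Let k1, k2 > 0 be real numbers, let λ1 ≤ λ2 < 0 be real numbers with λ1 + λ2 = −k2 and λ1·λ2 = k1, and let h : ℝ → ℝ be twice differentiable with h''(t) + k2·h'(t) + k1·h(t) ≥ 0 for all t ≥ 0 (the exponential control barrier function constraint). If h(0) ≥ 0 and h'(0) − λ1·h(0) ≥ 0, then h(t) ≥ h(0)·exp(λ1·t) ≥ 0 for all t ≥ 0; i.e., the safe set {h ≥ 0} is forward invariant under the ECBF constraint. -/

import Mathlib

/-! With `v := h' - λ₁ h`, the relations `λ₁ + λ₂ = -k₂`, `λ₁ λ₂ = k₁` factor the ECBF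
constraint as `v' - λ₂ v = h'' + k₂ h' + k₁ h ≥ 0`. A first-order comparison (`exp (-c t) f t`
is nondecreasing when `f' ≥ c f`) then gives `v t ≥ v 0 · exp (λ₂ t) ≥ 0`, i.e. `h' ≥ λ₁ h`,
and the same comparison applied to `h` gives `h t ≥ h 0 · exp (λ₁ t)`. -/

open Real Set

theorem mul_exp_le_of_mul_le_deriv {f : ℝ → ℝ} {c : ℝ} (hf : Differentiable ℝ f)
    (hf' : ∀ t, 0 ≤ t → c * f t ≤ deriv f t) {t : ℝ} (ht : 0 ≤ t) :
    f 0 * exp (c * t) ≤ f t := by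
  set g : ℝ → ℝ := fun s => exp (-c * s) * f s
  have hg : ∀ s, HasDerivAt g (exp (-c * s) * (deriv f s - c * f s)) s := fun s =>
    ((((hasDerivAt_id s).const_mul (-c)).exp).mul (hf s).hasDerivAt).congr_deriv
      (by simp only [id_eq]; ring)
  have hmono : MonotoneOn g (Ici 0) := by
    refine monotoneOn_of_deriv_nonneg (convex_Ici 0)
      (fun s _ => (hg s).continuousAt.continuousWithinAt)
      (fun s _ => (hg s).differentiableAt.differentiableWithinAt) fun s hs => ?_
    rw [interior_Ici] at hs
    rw [(hg s).deriv]
    exact mul_nonneg (exp_pos _).le (sub_nonneg.2 (hf' s (le_of_lt hs)))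
  have hg0t : f 0 ≤ exp (-c * t) * f t := by
    simpa [g] using hmono self_mem_Ici (mem_Ici.2 ht) ht
  calc f 0 * exp (c * t) ≤ exp (-c * t) * f t * exp (c * t) := by gcongr
    _ = f t := by rw [mul_right_comm, ← exp_add]; simp

theorem stmt_10_general (k1 k2 lam1 lam2 : ℝ)
    (hsum : lam1 + lam2 = -k2) (hprod : lam1 * lam2 = k1)
    (h : ℝ → ℝ) (hd1 : Differentiable ℝ h) (hd2 : Differentiable ℝ (deriv h))
    (hecbf : ∀ t : ℝ, 0 ≤ t → 0 ≤ deriv (deriv h) t + k2 * deriv h t + k1 * h t)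
    (h0 : 0 ≤ h 0) (h0' : 0 ≤ deriv h 0 - lam1 * h 0) :
    ∀ t : ℝ, 0 ≤ t → h 0 * Real.exp (lam1 * t) ≤ h t ∧ 0 ≤ h 0 * Real.exp (lam1 * t) := by
  set v : ℝ → ℝ := fun t => deriv h t - lam1 * h t
  have hv' : ∀ t, HasDerivAt v (deriv (deriv h) t - lam1 * deriv h t) t := fun t =>
    (hd2 t).hasDerivAt.sub ((hd1 t).hasDerivAt.const_mul lam1)
  have hv_deriv : ∀ t, 0 ≤ t → lam2 * v t ≤ deriv v t := fun t ht => by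
    have hfactor : deriv v t - lam2 * v t = deriv (deriv h) t + k2 * deriv h t + k1 * h t := by
      rw [(hv' t).deriv, ← hprod, show k2 = -(lam1 + lam2) by linarith]
      ring
    linarith [hecbf t ht]
  have hv_nonneg : ∀ t, 0 ≤ t → 0 ≤ v t := fun t ht =>
    (mul_nonneg h0' (exp_pos _).le).trans
      (mul_exp_le_of_mul_le_deriv (fun s => (hv' s).differentiableAt) hv_deriv ht)
  have hh_deriv : ∀ t, 0 ≤ t → lam1 * h t ≤ deriv h t := fun t ht =>
    sub_nonneg.1 (hv_nonneg t ht)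
  exact fun t ht => ⟨mul_exp_le_of_mul_le_deriv hd1 hh_deriv ht, by positivity⟩

/-- For `k1, k2 > 0` and real numbers `λ1 ≤ λ2 < 0` with `λ1 + λ2 = −k2` and
`λ1·λ2 = k1`, if `h : ℝ → ℝ` is twice differentiable and satisfies the ECBF constraint
`h'' + k2·h' + k1·h ≥ 0` for all `t ≥ 0`, and `h(0) ≥ 0` and `h'(0) − λ1·h(0) ≥ 0`, then
`h(t) ≥ h(0)·exp(λ1·t) ≥ 0` for all `t ≥ 0` (forward invariance of the safe set). -/
theorem stmt_10 (k1 k2 lam1 lam2 : ℝ) (hk1 : 0 < k1) (hk2 : 0 < k2)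
    (hle : lam1 ≤ lam2) (hneg : lam2 < 0)
    (hsum : lam1 + lam2 = -k2) (hprod : lam1 * lam2 = k1)
    (h : ℝ → ℝ) (hd1 : Differentiable ℝ h) (hd2 : Differentiable ℝ (deriv h))
    (hecbf : ∀ t : ℝ, 0 ≤ t → 0 ≤ deriv (deriv h) t + k2 * deriv h t + k1 * h t)
    (h0 : 0 ≤ h 0) (h0' : 0 ≤ deriv h 0 - lam1 * h 0) :
    ∀ t : ℝ, 0 ≤ t → h 0 * Real.exp (lam1 * t) ≤ h t ∧ 0 ≤ h 0 * Real.exp (lam1 * t) :=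
  stmt_10_general k1 k2 lam1 lam2 hsum hprod h hd1 hd2 hecbf h0 h0'
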